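/- arXiv:2602.00889 — 2 statements merged into one kernel-verified Lean document; each statement's English description precedes it below -/
import Mathlib

section
/- Let d ≥ 1, T > 0, θ > 0 and let f : ℝ^d → ℝ be continuous and ℤ^d-periodic. Let u be a smooth classical solution of the heat equation with absorption f, diffusivity θ and initial value u_0 = u(·,0), and suppose u(x,t) > 0 for all (x,t). If ∂_t²(log u) vanishes identically on ℝ^d × (0,T), then there exists λ ∈ ℝ such that u(x,t) = u_0(x)e^{λt} for all (x,t) ∈ ℝ^d × [0,T], and (θ/2)Δ_x u_0 − f u_0 = λ u_0, i.e. u_0 is an eigenfunction of the Schrödinger operator S_{θ,f} = (θ/2)Δ_x − f. Equivalently: if u_0 does not lie in an eigenspace of S_{θ,f}, then ∂_t² log u is not identically zero. -/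
open MeasureTheory Real Filter

noncomputable section

/-- Partial derivative in the `i`-th spatial coordinate. -/
def pder {d : ℕ} (i : Fin d) (v : (Fin d → ℝ) → ℝ) : (Fin d → ℝ) → ℝ :=
  fun x => deriv (fun s => v (Function.update x i s)) (x i)

/-- Spatial Laplacian `Δ_x = ∑ᵢ ∂²/∂xᵢ²`. -/
def lap {d : ℕ} (v : (Fin d → ℝ) → ℝ) : (Fin d → ℝ) → ℝ :=
  fun x => ∑ i : Fin d, pder i (pder i v) x

/-- Multi-index spatial derivative `∂^j`. -/
def mder {d : ℕ} (j : Fin d → ℕ) (v : (Fin d → ℝ) → ℝ) : (Fin d → ℝ) → ℝ :=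
  (List.finRange d).foldr (fun i acc => (pder i)^[j i] acc) v

/-- `ℤ^d`-periodicity of a function on `ℝ^d`. -/
def ZPer {d : ℕ} (F : (Fin d → ℝ) → ℝ) : Prop :=
  ∀ (x : Fin d → ℝ) (k : Fin d → ℤ), F (fun i => x i + (k i : ℝ)) = F x

/-- `ℤ^d`-periodicity in the space variable. -/
def ZPerSpace {d : ℕ} (u : (Fin d → ℝ) → ℝ → ℝ) : Prop :=
  ∀ t : ℝ, ZPer fun x => u x t

/-- The fundamental domain `[0,1]^d` of the torus. -/
def unitCube (d : ℕ) : Set (Fin d → ℝ) := Set.Icc 0 1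

/-- `L²`-norm on the torus. -/
def l2T {d : ℕ} (F : (Fin d → ℝ) → ℝ) : ℝ :=
  Real.sqrt (∫ x in unitCube d, (F x) ^ 2)

/-- `L²`-norm on `Q = 𝕋^d × (0,T)`. -/
def l2Q {d : ℕ} (T : ℝ) (u : (Fin d → ℝ) → ℝ → ℝ) : ℝ :=
  Real.sqrt (∫ t in Set.Ioc (0 : ℝ) T, ∫ x in unitCube d, (u x t) ^ 2)

/-- Supremum norm over space. -/
def supT {d : ℕ} (F : (Fin d → ℝ) → ℝ) : ℝ := ⨆ x, |F x|

/-- Supremum norm over `𝕋^d × [0,T]`. -/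
def supQ {d : ℕ} (T : ℝ) (u : (Fin d → ℝ) → ℝ → ℝ) : ℝ :=
  ⨆ x, ⨆ t ∈ Set.Icc (0 : ℝ) T, |u x t|

/-- Squared Sobolev `H^β`-norm on the torus:  `∑_{|j| ≤ β} ‖∂^j F‖²_{L²(𝕋^d)}`. -/
def hSobSq {d : ℕ} (β : ℕ) (F : (Fin d → ℝ) → ℝ) : ℝ :=
  ∑ j ∈ Finset.univ.filter (fun j : Fin d → Fin (β + 1) => (∑ i, (j i : ℕ)) ≤ β),
    ∫ x in unitCube d, (mder (fun i => (j i : ℕ)) F x) ^ 2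

/-- Sobolev `H^β`-norm on the torus. -/
def hSob {d : ℕ} (β : ℕ) (F : (Fin d → ℝ) → ℝ) : ℝ := Real.sqrt (hSobSq β F)

/-- Squared parabolic Sobolev `H^{2,1}(Q)`-norm. -/
def h21Sq {d : ℕ} (T : ℝ) (u : (Fin d → ℝ) → ℝ → ℝ) : ℝ :=
  (∫ t in Set.Ioc (0 : ℝ) T,
      ∑ j ∈ Finset.univ.filter (fun j : Fin d → Fin 3 => (∑ i, (j i : ℕ)) ≤ 2),
        ∫ x in unitCube d, (mder (fun i => (j i : ℕ)) (fun y => u y t) x) ^ 2)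
    + ∫ x in unitCube d, ∫ t in Set.Ioc (0 : ℝ) T, ((u x t) ^ 2 + (deriv (u x) t) ^ 2)

/-- Parabolic Sobolev `H^{2,1}(Q)`-norm. -/
def h21 {d : ℕ} (T : ℝ) (u : (Fin d → ℝ) → ℝ → ℝ) : ℝ := Real.sqrt (h21Sq T u)

/-- Smoothness of a function of space and time. -/
def SmoothQ {d : ℕ} (u : (Fin d → ℝ) → ℝ → ℝ) : Prop :=
  ContDiff ℝ (⊤ : ℕ∞) fun p : (Fin d → ℝ) × ℝ => u p.1 p.2

/-- A smooth classical solution of the heat equation with absorption `f`,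
diffusivity `θ` and initial value `u0`. -/
def HeatSol {d : ℕ} (T θ : ℝ) (f u0 : (Fin d → ℝ) → ℝ) (u : (Fin d → ℝ) → ℝ → ℝ) : Prop :=
  SmoothQ u ∧ ZPerSpace u ∧
    (∀ (x : Fin d → ℝ), ∀ t ∈ Set.Ioc (0 : ℝ) T,
      deriv (u x) t = θ / 2 * lap (fun y => u y t) x - f x * u x t) ∧
    ∀ x, u x 0 = u0 x

/-- A smooth solution of the inhomogeneous problem with forcing `g` and
zero initial value (`v = 𝓛_{θ,f}⁻¹ g`). -/
def InhomSol {d : ℕ} (T θ : ℝ) (f : (Fin d → ℝ) → ℝ) (g v : (Fin d → ℝ) → ℝ → ℝ) : Prop :=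
  SmoothQ v ∧ ZPerSpace v ∧
    (∀ (x : Fin d → ℝ), ∀ t ∈ Set.Ioc (0 : ℝ) T,
      deriv (v x) t = θ / 2 * lap (fun y => v y t) x - f x * v x t + g x t) ∧
    ∀ x, v x 0 = 0

/-- A link function: a smooth function `Φ : ℝ → (fmin, ∞)` with strictly positive
derivative and all derivatives bounded. -/
structure LinkFun where
  toFun : ℝ → ℝ
  fmin : ℝ
  fmin_pos : 0 < fmin
  smooth : ContDiff ℝ (⊤ : ℕ∞) toFun
  gt_fmin : ∀ x, fmin < toFun x
  deriv_pos : ∀ x, 0 < deriv toFun x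
  derivs_bdd : ∀ n : ℕ, 1 ≤ n → ∃ C, ∀ x, |iteratedDeriv n toFun x| ≤ C

/-- The linearized solution `I_{θ,F} h` in direction `h`, associated with a solution `u`. -/
def LinSol {d : ℕ} (T θ : ℝ) (Φ : LinkFun) (F h : (Fin d → ℝ) → ℝ)
    (u z : (Fin d → ℝ) → ℝ → ℝ) : Prop :=
  SmoothQ z ∧ ZPerSpace z ∧
    (∀ (x : Fin d → ℝ), ∀ t ∈ Set.Ioc (0 : ℝ) T,
      deriv (z x) t = θ / 2 * lap (fun y => z y t) x - Φ.toFun (F x) * z x t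
        + h x * deriv Φ.toFun (F x) * u x t) ∧
    ∀ x, z x 0 = 0

/-- The `θ`-derivative solution `K̇_θ F`, associated with a solution `u`. -/
def ThetaDerivSol {d : ℕ} (T θ : ℝ) (Φ : LinkFun) (F : (Fin d → ℝ) → ℝ)
    (u w : (Fin d → ℝ) → ℝ → ℝ) : Prop :=
  SmoothQ w ∧ ZPerSpace w ∧
    (∀ (x : Fin d → ℝ), ∀ t ∈ Set.Ioc (0 : ℝ) T,
      deriv (w x) t = θ / 2 * lap (fun y => w y t) x - Φ.toFun (F x) * w x t
        + 1 / 2 * lap (fun y => u y t) x) ∧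
    ∀ x, w x 0 = 0

/-- Dual Sobolev norm `‖G‖_{(H²)*}` on the torus. -/
def h2dual {d : ℕ} (G : (Fin d → ℝ) → ℝ) : ℝ :=
  sSup {r : ℝ | ∃ g : (Fin d → ℝ) → ℝ, ContDiff ℝ (⊤ : ℕ∞) g ∧ ZPer g ∧ hSob 2 g ≤ 1 ∧
    r = |∫ x in unitCube d, G x * g x|}

end

/-! Since `∂ₜ² log u = 0`, every trajectory is `u(x,t) = u₀(x) e^{λ(x) t}` with
`λ(x) = (log u(x,T) - log u(x,0)) / T`, a smooth function of `x`. Substituting this into the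
equation gives, at each `x`, a polynomial identity of degree two in `t` on `(0,T)`. Its leading
coefficient is `(θ/2) u₀ |∇λ|²`, so `∇λ = 0` and `λ` is constant; its constant coefficient is the
eigenvalue equation. -/

open Set

theorem constant_of_deriv_eq_zero_on_Ioo {g : ℝ → ℝ} {a b : ℝ}
    (hg : ContinuousOn g (Icc a b))
    (hgd : DifferentiableOn ℝ g (Ioo a b)) (h : ∀ t ∈ Ioo a b, deriv g t = 0) :
    ∀ t ∈ Icc a b, g t = g a := by
  intro t ht
  have hint : interior (Icc a b) = Ioo a b := interior_Icc
  have hmono := monotoneOn_of_deriv_nonneg (convex_Icc a b) hg (hint ▸ hgd)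
    (fun s hs => (h s (hint ▸ hs)).ge)
  have hanti := antitoneOn_of_deriv_nonpos (convex_Icc a b) hg (hint ▸ hgd)
    (fun s hs => (h s (hint ▸ hs)).le)
  have ha : a ∈ Icc a b := left_mem_Icc.2 (ht.1.trans ht.2)
  exact le_antisymm (hanti ha ht ht.1) (hmono ha ht ht.1)

theorem eq_add_mul_of_deriv_deriv_eq_zero {L : ℝ → ℝ} {a b : ℝ} (hab : a < b)
    (hL : ContinuousOn L (Icc a b)) (hL2 : ContDiffOn ℝ 2 L (Ioo a b))
    (h : ∀ t ∈ Ioo a b, deriv (deriv L) t = 0) :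
    ∀ t ∈ Icc a b, L t = L a + (L b - L a) / (b - a) * (t - a) := by
  obtain ⟨hLd, -, hL'⟩ := (contDiffOn_succ_iff_deriv_of_isOpen (n := 1) isOpen_Ioo).1 hL2
  obtain ⟨k, hk⟩ := isOpen_Ioo.exists_is_const_of_deriv_eq_zero isPreconnected_Ioo
    (hL'.differentiableOn one_ne_zero) h
  have hline : ∀ t ∈ Icc a b, L t - k * (t - a) = L a - k * (a - a) := by
    refine constant_of_deriv_eq_zero_on_Ioo (by fun_prop) (hLd.sub (by fun_prop)) fun t ht => ?_
    have hLt := (hLd.differentiableAt (Ioo_mem_nhds ht.1 ht.2)).hasDerivAt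
    have hd : HasDerivAt (fun s => L s - k * (s - a)) (deriv L t - k * 1) t :=
      hLt.sub (((hasDerivAt_id t).sub_const a).const_mul k)
    rw [hd.deriv, hk t ht]
    ring
  have hk_eq : k = (L b - L a) / (b - a) := by
    rw [eq_div_iff (sub_ne_zero.2 hab.ne')]
    linarith [hline b (right_mem_Icc.2 hab.le)]
  intro t ht
  rw [← hk_eq]
  linarith [hline t ht]

theorem eq_mul_exp_of_deriv_deriv_log_eq_zero {g : ℝ → ℝ} {a b : ℝ} (hab : a < b)
    (hg : ContDiff ℝ 2 g) (hpos : ∀ t ∈ Icc a b, 0 < g t)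
    (h : ∀ t ∈ Ioo a b, deriv (deriv fun s => Real.log (g s)) t = 0) :
    ∀ t ∈ Icc a b,
      g t = g a * Real.exp ((Real.log (g b) - Real.log (g a)) / (b - a) * (t - a)) := by
  have hlog := eq_add_mul_of_deriv_deriv_eq_zero hab
    (hg.continuous.continuousOn.log fun t ht => (hpos t ht).ne')
    (hg.contDiffOn.log fun t ht => (hpos t (Ioo_subset_Icc_self ht)).ne') h
  intro t ht
  rw [← Real.exp_log (hpos t ht), hlog t ht, Real.exp_add,
    Real.exp_log (hpos a (left_mem_Icc.2 hab.le))]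

theorem deriv_eq_mul_of_eqOn_mul_exp {g : ℝ → ℝ} {a b c k t : ℝ}
    (h : EqOn g (fun s => c * Real.exp (k * (s - a))) (Icc a b)) (ht : t ∈ Ioo a b) :
    deriv g t = k * g t := by
  have hev : g =ᶠ[nhds t] fun s => c * Real.exp (k * (s - a)) :=
    Filter.mem_of_superset (Icc_mem_nhds ht.1 ht.2) h
  have hd : HasDerivAt (fun s => c * Real.exp (k * (s - a))) (c * (Real.exp (k * (t - a)) * k)) t :=
    ((((hasDerivAt_id t).sub_const a).const_mul k).exp).const_mul c |>.congr_deriv (by simp)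
  rw [hev.deriv_eq, hd.deriv, h (Ioo_subset_Icc_self ht)]
  ring

theorem deriv_deriv_mul_exp {a b : ℝ → ℝ} (ha : ContDiff ℝ 2 a) (hb : ContDiff ℝ 2 b)
    (t s : ℝ) :
    deriv (deriv fun r => a r * Real.exp (b r * t)) s
      = (deriv (deriv a) s + (2 * deriv a s * deriv b s + a s * deriv (deriv b) s) * t
          + a s * deriv b s ^ 2 * t ^ 2) * Real.exp (b s * t) := by
  have ha1 : Differentiable ℝ a := ha.differentiable (by norm_num)
  have hb1 : Differentiable ℝ b := hb.differentiable (by norm_num)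
  have ha2 : Differentiable ℝ (deriv a) :=
    (contDiff_succ_iff_deriv.1 ha).2.2.differentiable one_ne_zero
  have hb2 : Differentiable ℝ (deriv b) :=
    (contDiff_succ_iff_deriv.1 hb).2.2.differentiable one_ne_zero
  have hE : ∀ r, HasDerivAt (fun r => Real.exp (b r * t))
      (Real.exp (b r * t) * (deriv b r * t)) r :=
    fun r => ((hb1 r).hasDerivAt.mul_const t).exp
  have hfirst : deriv (fun r => a r * Real.exp (b r * t))
      = fun r => (deriv a r + a r * (deriv b r * t)) * Real.exp (b r * t) := by
    funext r
    have h : HasDerivAt (fun r => a r * Real.exp (b r * t)) _ r := (ha1 r).hasDerivAt.mul (hE r)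
    rw [h.deriv]
    ring
  have hsecond :
      HasDerivAt (fun r => (deriv a r + a r * (deriv b r * t)) * Real.exp (b r * t)) _ s :=
    ((ha2 s).hasDerivAt.add ((ha1 s).hasDerivAt.mul ((hb2 s).hasDerivAt.mul_const t))).mul (hE s)
  rw [hfirst, hsecond.deriv]
  simp only [Pi.add_apply, Pi.mul_apply]
  ring

theorem quadratic_coeffs_eq_zero_of_vanish_on_Ioo {α β γ a b : ℝ} (hab : a < b)
    (h : ∀ t ∈ Ioo a b, α + β * t + γ * t ^ 2 = 0) : α = 0 ∧ β = 0 ∧ γ = 0 := by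
  set δ := (b - a) / 4 with hδ
  have hδpos : 0 < δ := by rw [hδ]; linarith
  have e1 := h (a + δ) ⟨by linarith, by linarith⟩
  have e2 := h (a + 2 * δ) ⟨by linarith, by linarith⟩
  have e3 := h (a + 3 * δ) ⟨by linarith, by linarith⟩
  have hγ : γ = 0 := by
    have : γ * (2 * δ ^ 2) = 0 := by linear_combination e1 - 2 * e2 + e3
    simpa [hδpos.ne'] using this
  have hβ : β = 0 := by
    have : β * δ = 0 := by linear_combination e2 - e1 - (3 * δ ^ 2 + 2 * a * δ) * hγ
    simpa [hδpos.ne'] using this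
  refine ⟨?_, hβ, hγ⟩
  linear_combination e1 - (a + δ) * hβ - (a + δ) ^ 2 * hγ

section Laplacian

variable {d : ℕ}

theorem pder_pder_apply (V : (Fin d → ℝ) → ℝ) (i : Fin d) (x : Fin d → ℝ) :
    pder i (pder i V) x = deriv (deriv fun s => V (Function.update x i s)) (x i) := by
  simp only [pder, Function.update_idem, Function.update_self]

theorem ContDiff.comp_update {n : ℕ∞} {V : (Fin d → ℝ) → ℝ} (hV : ContDiff ℝ n V)
    (x : Fin d → ℝ) (i : Fin d) : ContDiff ℝ n fun s => V (Function.update x i s) :=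
  hV.comp (contDiff_update _ x i)

theorem lap_mul_exp {v μ : (Fin d → ℝ) → ℝ} (hv : ContDiff ℝ 2 v) (hμ : ContDiff ℝ 2 μ)
    (t : ℝ) (x : Fin d → ℝ) :
    lap (fun y => v y * Real.exp (μ y * t)) x
      = (lap v x + (∑ i, (2 * pder i v x * pder i μ x + v x * pder i (pder i μ) x)) * t
          + v x * (∑ i, pder i μ x ^ 2) * t ^ 2) * Real.exp (μ x * t) := by
  have hterm : ∀ i, pder i (pder i fun y => v y * Real.exp (μ y * t)) x
      = (pder i (pder i v) x + (2 * pder i v x * pder i μ x + v x * pder i (pder i μ) x) * t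
          + v x * pder i μ x ^ 2 * t ^ 2) * Real.exp (μ x * t) := by
    intro i
    rw [pder_pder_apply, deriv_deriv_mul_exp (hv.comp_update x i) (hμ.comp_update x i),
      pder_pder_apply, pder_pder_apply]
    simp only [pder, Function.update_eq_self]
  simp only [lap, hterm, ← Finset.sum_mul, Finset.sum_add_distrib, Finset.mul_sum]

theorem pder_eq_fderiv_single {μ : (Fin d → ℝ) → ℝ} {x : Fin d → ℝ}
    (hμ : DifferentiableAt ℝ μ x) (i : Fin d) : pder i μ x = fderiv ℝ μ x (Pi.single i 1) := by
  rw [← Function.update_eq_self i x] at hμ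
  have h := (hμ.hasFDerivAt.comp_hasDerivAt (x i) (hasDerivAt_update x i (x i))).deriv
  rwa [Function.update_eq_self] at h

theorem eq_of_pder_eq_zero {μ : (Fin d → ℝ) → ℝ} (hμ : Differentiable ℝ μ)
    (h : ∀ x i, pder i μ x = 0) (x y : Fin d → ℝ) : μ x = μ y := by
  refine is_const_of_fderiv_eq_zero hμ (fun z => ?_) x y
  refine ContinuousLinearMap.coe_injective (LinearMap.pi_ext fun i c => ?_)
  rw [← mul_one c, ← smul_eq_mul, Pi.single_smul']
  simp [← pder_eq_fderiv_single (hμ z), h]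

theorem pder_eq_zero_and_schrodinger_eq_of_separated_heat_eq {θ a b : ℝ}
    {f v μ : (Fin d → ℝ) → ℝ} {x : Fin d → ℝ} (hθ : θ ≠ 0) (hab : a < b)
    (hv : ContDiff ℝ 2 v) (hμ : ContDiff ℝ 2 μ) (hvx : v x ≠ 0)
    (h : ∀ t ∈ Ioo a b, μ x * (v x * Real.exp (μ x * t))
      = θ / 2 * lap (fun y => v y * Real.exp (μ y * t)) x - f x * (v x * Real.exp (μ x * t))) :
    (∀ i, pder i μ x = 0) ∧ θ / 2 * lap v x - f x * v x = μ x * v x := by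
  obtain ⟨h0, -, h2⟩ := quadratic_coeffs_eq_zero_of_vanish_on_Ioo
    (α := θ / 2 * lap v x - f x * v x - μ x * v x)
    (β := θ / 2 * ∑ i, (2 * pder i v x * pder i μ x + v x * pder i (pder i μ) x))
    (γ := θ / 2 * v x * ∑ i, pder i μ x ^ 2) hab fun t ht => by
      have hE := (Real.exp_pos (μ x * t)).ne'
      have ht := h t ht
      rw [lap_mul_exp hv hμ] at ht
      refine mul_right_cancel₀ hE ?_
      linear_combination -ht
  have hsum : ∑ i, pder i μ x ^ 2 = 0 := by simpa [hθ, hvx] using h2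
  refine ⟨fun i => ?_, by linarith⟩
  exact pow_eq_zero_iff two_ne_zero |>.1 <|
    (Finset.sum_eq_zero_iff_of_nonneg fun j _ => sq_nonneg _).1 hsum i (Finset.mem_univ i)

end Laplacian

theorem log_affine_implies_eigenfunction_general {d : ℕ} (T θ : ℝ)
    (hT : 0 < T) (hθ : 0 < θ) (f : (Fin d → ℝ) → ℝ)
    (u : (Fin d → ℝ) → ℝ → ℝ) (hu : HeatSol T θ f (fun x => u x 0) u)
    (hpos : ∀ (x : Fin d → ℝ), ∀ t ∈ Set.Icc (0 : ℝ) T, 0 < u x t)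
    (hlog : ∀ (x : Fin d → ℝ), ∀ t ∈ Set.Ioo (0 : ℝ) T,
      deriv (deriv fun s => Real.log (u x s)) t = 0) :
    ∃ lam : ℝ,
      (∀ (x : Fin d → ℝ), ∀ t ∈ Set.Icc (0 : ℝ) T, u x t = u x 0 * Real.exp (lam * t)) ∧
      ∀ x, θ / 2 * lap (fun y => u y 0) x - f x * u x 0 = lam * u x 0 := by
  obtain ⟨hsm, -, hpde, -⟩ := hu
  have hsm2 : ContDiff ℝ 2 fun p : (Fin d → ℝ) × ℝ => u p.1 p.2 :=
    hsm.of_le (WithTop.coe_le_coe.2 le_top)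
  have hslice : ∀ t, ContDiff ℝ 2 fun x => u x t := fun t =>
    hsm2.comp (contDiff_id.prodMk contDiff_const)
  have hline : ∀ x, ContDiff ℝ 2 (u x) := fun x => hsm2.comp (contDiff_const.prodMk contDiff_id)
  set lam := fun x => (Real.log (u x T) - Real.log (u x 0)) / (T - 0)
  have hsep : ∀ x, EqOn (u x) (fun t => u x 0 * Real.exp (lam x * (t - 0))) (Icc 0 T) :=
    fun x => eq_mul_exp_of_deriv_deriv_log_eq_zero hT (hline x) (hpos x) (hlog x)
  have hlam : ContDiff ℝ 2 lam :=
    (((hslice T).log fun x => (hpos x T ⟨hT.le, le_rfl⟩).ne').sub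
      ((hslice 0).log fun x => (hpos x 0 ⟨le_rfl, hT.le⟩).ne')).div_const _
  have hpoint : ∀ x, (∀ i, pder i lam x = 0) ∧
      θ / 2 * lap (fun y => u y 0) x - f x * u x 0 = lam x * u x 0 := fun x =>
    pder_eq_zero_and_schrodinger_eq_of_separated_heat_eq hθ.ne' hT (hslice 0) hlam
      (hpos x 0 ⟨le_rfl, hT.le⟩).ne' fun t ht => by
        have hlapt : lap (fun y => u y t) = lap fun y => u y 0 * Real.exp (lam y * t) :=
          congrArg lap (funext fun y => by simpa using hsep y (Ioo_subset_Icc_self ht))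
        have hpdet := hpde x t (Ioo_subset_Ioc_self ht)
        rw [deriv_eq_mul_of_eqOn_mul_exp (hsep x) ht, hlapt,
          hsep x (Ioo_subset_Icc_self ht)] at hpdet
        simpa using hpdet
  have hconst : ∀ x, lam x = lam 0 := fun x =>
    eq_of_pder_eq_zero (hlam.differentiable two_ne_zero) (fun y => (hpoint y).1) x 0
  refine ⟨lam 0, fun x t ht => ?_, fun x => hconst x ▸ (hpoint x).2⟩
  rw [hsep x ht]
  simp only [hconst x, sub_zero]

/-- if `∂_t² log u ≡ 0`, then `u(x,t) = u₀(x) e^{λ t}` and `u₀` is an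
eigenfunction of the Schrödinger operator `S_{θ,f} = (θ/2)Δ_x − f`. -/
theorem log_affine_implies_eigenfunction {d : ℕ} (hd : 1 ≤ d) (T θ : ℝ)
    (hT : 0 < T) (hθ : 0 < θ) (f : (Fin d → ℝ) → ℝ) (hf : Continuous f) (hfper : ZPer f)
    (u : (Fin d → ℝ) → ℝ → ℝ) (hu : HeatSol T θ f (fun x => u x 0) u)
    (hpos : ∀ (x : Fin d → ℝ), ∀ t ∈ Set.Icc (0 : ℝ) T, 0 < u x t)
    (hlog : ∀ (x : Fin d → ℝ), ∀ t ∈ Set.Ioo (0 : ℝ) T,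
      deriv (deriv fun s => Real.log (u x s)) t = 0) :
    ∃ lam : ℝ,
      (∀ (x : Fin d → ℝ), ∀ t ∈ Set.Icc (0 : ℝ) T, u x t = u x 0 * Real.exp (lam * t)) ∧
      ∀ x, θ / 2 * lap (fun y => u y 0) x - f x * u x 0 = lam * u x 0 :=
  log_affine_implies_eigenfunction_general T θ hT hθ f u hu hpos hlog
end

section
/- Fix d ≥ 1, T > 0, a compact interval Θ = [θ_min, θ_max] ⊂ (0,∞), a link function Φ, and a smooth ℤ^d-periodic initial value u_0. There exists a constant D > 0, depending only on d, T, Θ, Φ and u_0, such that: for every θ ∈ Θ and all continuous ℤ^d-periodic F, F₀ : ℝ^d → ℝ, if u_F and u_{F₀} are smooth classical solutions of the heat equation with absorptions Φ∘F and Φ∘F₀ respectively, both with diffusivity θ and initial value u_0, then ‖u_F − u_{F₀}‖_{L²(Q)} ≤ D ‖F − F₀‖_{L²(𝕋^d)}. (Lemma 'bounds', item (i): Lipschitz continuity of the forward map F ↦ K_θF in L².) -/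
open MeasureTheory Real Filter

/-!
The difference `w = u_F - u_{F₀}` solves `∂ₜw = (θ/2)Δw - Φ(F) w + (Φ(F₀) - Φ(F)) u_{F₀}` with
`w(0) = 0`. Since the absorption `Φ` is positive, the maximum principle bounds `|u_{F₀}|` by
`M = sup |u₀|`, and `Φ` is `L`-Lipschitz, so the forcing term has `L²(𝕋^d)`-norm at most
`L M ‖F - F₀‖` at every time. Testing the equation against `w` and using `∫ Δ(w²) = 0` on the
torus gives `(d/dt)‖w‖² ≤ ‖w‖² + L² M² ‖F - F₀‖²`, so by Grönwall `‖w(t)‖² ≤ e^T L² M² ‖F - F₀‖²`,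
and integrating over `(0, T)` gives `‖w‖_{L²(Q)} ≤ √(T e^T) L M ‖F - F₀‖`.
-/

open Set Topology
open scoped ContDiff

section

variable {d : ℕ}

lemma pder_eq_fderiv {v : (Fin d → ℝ) → ℝ} {x : Fin d → ℝ} (hv : DifferentiableAt ℝ v x)
    (i : Fin d) : pder i v x = fderiv ℝ v x (Pi.single i 1) := by
  rw [← Function.update_eq_self i x] at hv
  have h := hv.hasFDerivAt.comp_hasDerivAt (x i) (hasDerivAt_update x i (x i))
  rw [Function.update_eq_self] at h
  exact h.deriv

lemma pder_update (v : (Fin d → ℝ) → ℝ) (i : Fin d) (x : Fin d → ℝ) (s : ℝ) :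
    pder i v (Function.update x i s) = deriv (fun s' => v (Function.update x i s')) s := by
  simp only [pder, Function.update_self, Function.update_idem]

lemma contDiff_pder {v : (Fin d → ℝ) → ℝ} (hv : ContDiff ℝ ∞ v) (i : Fin d) :
    ContDiff ℝ ∞ (pder i v) := by
  have : pder i v = fun x => fderiv ℝ v x (Pi.single i 1) :=
    funext fun x => pder_eq_fderiv (hv.differentiable (by simp) x) i
  rw [this]
  exact (hv.fderiv_right le_rfl).clm_apply contDiff_const

lemma pder_neg (v : (Fin d → ℝ) → ℝ) (i : Fin d) :
    pder i (fun y => -v y) = fun x => -pder i v x :=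
  funext fun _ => deriv.fun_neg

lemma lap_neg (v : (Fin d → ℝ) → ℝ) (x : Fin d → ℝ) :
    lap (fun y => -v y) x = -lap v x := by
  simp only [lap, pder_neg, Finset.sum_neg_distrib]

lemma pder_sub {v w : (Fin d → ℝ) → ℝ} (hv : Differentiable ℝ v) (hw : Differentiable ℝ w)
    (i : Fin d) : pder i (fun y => v y - w y) = fun x => pder i v x - pder i w x := by
  funext x
  rw [pder_eq_fderiv ((hv x).fun_sub (hw x)), pder_eq_fderiv (hv x), pder_eq_fderiv (hw x),
    fderiv_fun_sub (hv x) (hw x)]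
  rfl

lemma lap_sub {v w : (Fin d → ℝ) → ℝ} (hv : ContDiff ℝ ∞ v) (hw : ContDiff ℝ ∞ w)
    (x : Fin d → ℝ) : lap (fun y => v y - w y) x = lap v x - lap w x := by
  have hdiff {f : (Fin d → ℝ) → ℝ} (hf : ContDiff ℝ ∞ f) : Differentiable ℝ f :=
    hf.differentiable (by simp)
  simp only [lap, ← Finset.sum_sub_distrib, pder_sub (hdiff hv) (hdiff hw),
    pder_sub (hdiff (contDiff_pder hv _)) (hdiff (contDiff_pder hw _))]

lemma pder_mul {v w : (Fin d → ℝ) → ℝ} {x : Fin d → ℝ} (hv : DifferentiableAt ℝ v x)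
    (hw : DifferentiableAt ℝ w x) (i : Fin d) :
    pder i (fun y => v y * w y) x = v x * pder i w x + pder i v x * w x := by
  rw [pder_eq_fderiv (hv.fun_mul hw), pder_eq_fderiv hv, pder_eq_fderiv hw, fderiv_fun_mul hv hw]
  simp [mul_comm]

lemma lap_sq {v : (Fin d → ℝ) → ℝ} (hv : ContDiff ℝ ∞ v) (x : Fin d → ℝ) :
    lap (fun y => v y ^ 2) x = 2 * v x * lap v x + 2 * ∑ i, pder i v x ^ 2 := by
  have hdiff {f : (Fin d → ℝ) → ℝ} (hf : ContDiff ℝ ∞ f) : Differentiable ℝ f :=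
    hf.differentiable (by simp)
  simp only [lap, Finset.mul_sum, ← Finset.sum_add_distrib]
  refine Finset.sum_congr rfl fun i _ => ?_
  have hsq : pder i (fun y => v y ^ 2) = fun y => (2 * v y) * pder i v y := by
    funext y
    simp only [sq, pder_mul (hdiff hv y) (hdiff hv y)]
    ring
  have htwice : pder i (fun y => 2 * v y) x = 2 * pder i v x := by
    rw [pder_mul (differentiableAt_const _) (hdiff hv x)]
    simp [pder]
  rw [hsq, pder_mul ((hdiff hv x).const_mul 2) (hdiff (contDiff_pder hv i) x), htwice]
  ring

lemma zPer_pder {v : (Fin d → ℝ) → ℝ} (hv : ZPer v) (i : Fin d) : ZPer (pder i v) := by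
  intro x k
  have hline : (fun s => v (Function.update (fun j => x j + (k j : ℝ)) i s))
      = fun s => v (Function.update x i (s - k i)) := by
    funext s
    rw [← hv (Function.update x i (s - k i)) k]
    congr 1
    funext j
    by_cases hj : j = i
    · subst hj; simp
    · simp [Function.update_of_ne hj]
  simp only [pder, hline]
  rw [deriv_comp_sub_const (f := fun s => v (Function.update x i s)), add_sub_cancel_right]

lemma ZPer.exists_mem_unitCube_eq {F : (Fin d → ℝ) → ℝ} (hF : ZPer F) (x : Fin d → ℝ) :
    ∃ y ∈ unitCube d, F x = F y := by
  refine ⟨fun i => Int.fract (x i),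
    ⟨fun i => Int.fract_nonneg _, fun i => (Int.fract_lt_one _).le⟩, ?_⟩
  rw [← hF (fun i => Int.fract (x i)) (fun i => ⌊x i⌋)]
  simp only [Int.fract_add_floor]

lemma ZPer.exists_abs_le {F : (Fin d → ℝ) → ℝ} (hF : ZPer F) (hc : Continuous F) :
    ∃ M, 0 ≤ M ∧ ∀ x, |F x| ≤ M := by
  obtain ⟨M, hM⟩ := (isCompact_Icc : IsCompact (unitCube d)).exists_bound_of_continuousOn
    hc.continuousOn
  refine ⟨max M 0, le_max_right _ _, fun x => ?_⟩
  obtain ⟨y, hy, hxy⟩ := hF.exists_mem_unitCube_eq x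
  rw [hxy]
  exact (hM y hy).trans (le_max_left _ _)

lemma setIntegral_unitCube_succ {n : ℕ} {f : (Fin (n + 1) → ℝ) → ℝ} (hf : Continuous f)
    (i : Fin (n + 1)) :
    ∫ x in unitCube (n + 1), f x
      = ∫ y in Icc (0 : Fin n → ℝ) 1, ∫ s in Icc (0 : ℝ) 1, f (i.insertNth s y) := by
  let e := (MeasurableEquiv.piFinSuccAbove (fun _ => ℝ) i).symm
  have he : MeasurePreserving e :=
    (volume_preserving_piFinSuccAbove (fun _ : Fin (n + 1) => ℝ) i).symm _
  have hpre : e ⁻¹' unitCube (n + 1) = Icc (0 : ℝ) 1 ×ˢ Icc (0 : Fin n → ℝ) 1 :=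
    ((Fin.insertNthOrderIso (fun _ => ℝ) i).preimage_Icc _ _).trans (Icc_prod_eq _ _)
  have hcont : Continuous fun p : ℝ × (Fin n → ℝ) => f (i.insertNth p.1 p.2) :=
    hf.comp (Continuous.finInsertNth i continuous_fst continuous_snd)
  rw [← he.setIntegral_preimage_emb e.measurableEmbedding, hpre, Measure.volume_eq_prod,
    ← Measure.prod_restrict, integral_prod_symm]
  · rfl
  · rw [Measure.prod_restrict]
    exact hcont.continuousOn.integrableOn_compact (isCompact_Icc.prod isCompact_Icc)

lemma ZPer.integral_pder_update_eq_zero {v : (Fin d → ℝ) → ℝ} (hv : ContDiff ℝ ∞ v)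
    (hper : ZPer v) (i : Fin d) (x : Fin d → ℝ) :
    ∫ s in Icc (0 : ℝ) 1, pder i v (Function.update x i s) = 0 := by
  let h : ℝ → ℝ := fun s => v (Function.update x i s)
  have hh : ContDiff ℝ ∞ h := hv.comp (contDiff_update _ x i)
  have hperiod : h 1 = h 0 := by
    show v _ = v _
    rw [← hper (Function.update x i 0) (Pi.single i 1)]
    congr 1
    funext j
    by_cases hj : j = i
    · subst hj; simp
    · simp [hj]
  simp only [pder_update]
  rw [integral_Icc_eq_integral_Ioc, ← intervalIntegral.integral_of_le zero_le_one,
    intervalIntegral.integral_deriv_eq_sub (fun s _ => hh.differentiable (by simp) s)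
      ((hh.continuous_deriv (by simp)).intervalIntegrable 0 1), hperiod, sub_self]

lemma ZPer.integral_pder_eq_zero {v : (Fin d → ℝ) → ℝ} (hv : ContDiff ℝ ∞ v) (hper : ZPer v)
    (i : Fin d) : ∫ x in unitCube d, pder i v x = 0 := by
  obtain ⟨n, rfl⟩ : ∃ n, d = n + 1 := ⟨d - 1, by have := i.pos; omega⟩
  rw [setIntegral_unitCube_succ (contDiff_pder hv i).continuous i]
  refine (setIntegral_congr_fun measurableSet_Icc fun y _ => ?_).trans (integral_zero _ ℝ)
  convert hper.integral_pder_update_eq_zero hv i (i.insertNth (α := fun _ => ℝ) 0 y) using 3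
  simp

lemma ZPer.integral_lap_eq_zero {v : (Fin d → ℝ) → ℝ} (hv : ContDiff ℝ ∞ v) (hper : ZPer v) :
    ∫ x in unitCube d, lap v x = 0 := by
  have hint : ∀ i ∈ Finset.univ, IntegrableOn (pder i (pder i v)) (unitCube d) :=
    fun i _ => (contDiff_pder (contDiff_pder hv i) i).continuous.integrableOn_Icc
  simp only [lap]
  rw [integral_finsetSum _ hint]
  exact Finset.sum_eq_zero fun i _ =>
    (zPer_pder hper i).integral_pder_eq_zero (contDiff_pder hv i) i

namespace SmoothQ

variable {u v : (Fin d → ℝ) → ℝ → ℝ}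

lemma contDiff_space (hu : SmoothQ u) (t : ℝ) : ContDiff ℝ ∞ fun y => u y t :=
  hu.comp (contDiff_id.prodMk contDiff_const)

lemma contDiff_time (hu : SmoothQ u) (x : Fin d → ℝ) : ContDiff ℝ ∞ (u x) :=
  hu.comp (contDiff_const.prodMk contDiff_id)

lemma neg (hu : SmoothQ u) : SmoothQ fun x t => -u x t :=
  ContDiff.neg hu

lemma sub (hu : SmoothQ u) (hv : SmoothQ v) : SmoothQ fun x t => u x t - v x t :=
  ContDiff.sub hu hv

lemma continuous_deriv_time (hu : SmoothQ u) :
    Continuous fun p : (Fin d → ℝ) × ℝ => deriv (u p.1) p.2 := by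
  have hderiv (x : Fin d → ℝ) (t : ℝ) : deriv (u x) t
      = fderiv ℝ (fun p : (Fin d → ℝ) × ℝ => u p.1 p.2) (x, t) (0, 1) :=
    ((hu.differentiable (by simp) (x, t)).hasFDerivAt.comp_hasDerivAt t
      ((hasDerivAt_const t x).prodMk (hasDerivAt_id t))).deriv
  simp only [hderiv]
  exact (hu.continuous_fderiv (by simp)).clm_apply continuous_const

lemma hasDerivAt_setIntegral (hu : SmoothQ u) {K : Set (Fin d → ℝ)} (hK : IsCompact K)
    (t₀ : ℝ) : HasDerivAt (fun t => ∫ x in K, u x t) (∫ x in K, deriv (u x) t₀) t₀ := by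
  obtain ⟨C, hC⟩ := (hK.prod (isCompact_closedBall t₀ 1)).exists_bound_of_continuousOn
    hu.continuous_deriv_time.continuousOn
  refine (hasDerivAt_integral_of_dominated_loc_of_deriv_le (bound := fun _ => C)
    (F' := fun t x => deriv (u x) t)
    (Metric.ball_mem_nhds t₀ one_pos)
    (Eventually.of_forall fun t => (hu.contDiff_space t).continuous.aestronglyMeasurable)
    ((hu.contDiff_space t₀).continuous.continuousOn.integrableOn_compact hK)
    (hu.continuous_deriv_time.comp (continuous_id.prodMk continuous_const)).aestronglyMeasurable
    ?_ (integrableOn_const hK.measure_lt_top.ne) ?_).2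
  · filter_upwards [ae_restrict_mem hK.measurableSet] with x hx t ht
    exact hC (x, t) ⟨hx, Metric.ball_subset_closedBall ht⟩
  · exact Eventually.of_forall fun x t _ =>
      ((hu.contDiff_time x).differentiable (by simp) t).hasDerivAt

lemma hasDerivAt_setIntegral_sq (hu : SmoothQ u) {K : Set (Fin d → ℝ)} (hK : IsCompact K)
    (t₀ : ℝ) :
    HasDerivAt (fun t => ∫ x in K, u x t ^ 2) (∫ x in K, 2 * u x t₀ * deriv (u x) t₀) t₀ := by
  have hsq : SmoothQ fun x t => u x t ^ 2 := ContDiff.pow hu 2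
  convert hsq.hasDerivAt_setIntegral hK t₀ using 3 with x
  rw [(((hu.contDiff_time x).differentiable (by simp) t₀).hasDerivAt.fun_pow 2).deriv]
  ring

end SmoothQ

lemma IsLocalMax.deriv_deriv_nonpos {f : ℝ → ℝ} {a : ℝ} (h : IsLocalMax f a)
    (hc : ContinuousAt f a) : deriv (deriv f) a ≤ 0 := by
  by_contra! hpos
  -- the second-derivative test would make `a` a local minimum too, so `f` is constant near `a`
  have hconst : f =ᶠ[𝓝 a] fun _ => f a :=
    (h.and (isLocalMin_of_deriv_deriv_pos hpos h.deriv_eq_zero hc)).mono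
      fun _ hx => le_antisymm hx.1 hx.2
  have h0 := hconst.deriv.deriv_eq
  simp only [deriv_const'] at h0
  exact hpos.ne' h0

lemma lap_nonpos_of_forall_le {v : (Fin d → ℝ) → ℝ} (hv : ContDiff ℝ ∞ v) {x₀ : Fin d → ℝ}
    (hmax : ∀ y, v y ≤ v x₀) : lap v x₀ ≤ 0 := by
  refine Finset.sum_nonpos fun i _ => ?_
  let h : ℝ → ℝ := fun s => v (Function.update x₀ i s)
  have hloc : IsLocalMax h (x₀ i) := Eventually.of_forall fun s => by simpa [h] using hmax _
  have hpder : (fun s => pder i v (Function.update x₀ i s)) = deriv h :=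
    funext (pder_update v i x₀)
  show deriv (fun s => pder i v (Function.update x₀ i s)) (x₀ i) ≤ 0
  rw [hpder]
  exact hloc.deriv_deriv_nonpos (hv.comp (contDiff_update _ x₀ i)).continuous.continuousAt

lemma HasDerivAt.nonneg_of_forall_le {f : ℝ → ℝ} {f' a b : ℝ} (hf : HasDerivAt f f' b)
    (hab : a < b) (hmax : ∀ t ∈ Icc a b, f t ≤ f b) : 0 ≤ f' := by
  have hslope : Tendsto (slope f b) (𝓝[<] b) (𝓝 f') :=
    (hasDerivAt_iff_tendsto_slope.mp hf).mono_left (nhdsWithin_mono _ fun _ ht => ne_of_lt ht)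
  refine ge_of_tendsto hslope ?_
  filter_upwards [Ioo_mem_nhdsLT hab] with t ht
  rw [slope_def_field]
  exact div_nonneg_of_nonpos (sub_nonpos.2 (hmax t (Ioo_subset_Icc_self ht)))
    (sub_nonpos.2 ht.2.le)

lemma ZPerSpace.exists_forall_le {u : (Fin d → ℝ) → ℝ → ℝ}
    (hu : Continuous fun p : (Fin d → ℝ) × ℝ => u p.1 p.2) (hper : ZPerSpace u) {T : ℝ}
    (hT : 0 ≤ T) : ∃ x₀, ∃ t₀ ∈ Icc 0 T, ∀ x, ∀ t ∈ Icc 0 T, u x t ≤ u x₀ t₀ := by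
  obtain ⟨p₀, hp₀, hmax⟩ := (isCompact_Icc.prod isCompact_Icc :
      IsCompact (unitCube d ×ˢ Icc 0 T)).exists_isMaxOn
    ⟨(0, 0), left_mem_Icc.2 zero_le_one, left_mem_Icc.2 hT⟩ hu.continuousOn
  refine ⟨p₀.1, p₀.2, hp₀.2, fun x t ht => ?_⟩
  obtain ⟨y, hy, hxy⟩ := (hper t).exists_mem_unitCube_eq x
  exact hxy.trans_le (hmax (show (y, t) ∈ unitCube d ×ˢ Icc 0 T from ⟨hy, ht⟩))

namespace HeatSol

variable {T θ : ℝ} {f u0 : (Fin d → ℝ) → ℝ} {u : (Fin d → ℝ) → ℝ → ℝ}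

lemma neg (hu : HeatSol T θ f u0 u) : HeatSol T θ f (fun x => -u0 x) fun x t => -u x t := by
  obtain ⟨hsm, hper, hpde, hinit⟩ := hu
  refine ⟨hsm.neg, fun t x k => congrArg Neg.neg (hper t x k), fun x t ht => ?_,
    fun x => by simp only [hinit]⟩
  rw [deriv.fun_neg, lap_neg, hpde x t ht]
  ring

lemma sub {f₀ : (Fin d → ℝ) → ℝ} {u₀ : (Fin d → ℝ) → ℝ → ℝ} (hu : HeatSol T θ f u0 u)
    (hu₀ : HeatSol T θ f₀ u0 u₀) :
    InhomSol T θ f (fun x t => (f₀ x - f x) * u₀ x t) fun x t => u x t - u₀ x t := by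
  obtain ⟨hsm, hper, hpde, hinit⟩ := hu
  obtain ⟨hsm₀, hper₀, hpde₀, hinit₀⟩ := hu₀
  refine ⟨hsm.sub hsm₀, fun t x k => by simp only [hper t x k, hper₀ t x k],
    fun x t ht => ?_, fun x => by simp only [hinit, hinit₀, sub_self]⟩
  rw [deriv_fun_sub ((hsm.contDiff_time x).differentiable (by simp) t)
      ((hsm₀.contDiff_time x).differentiable (by simp) t),
    lap_sub (hsm.contDiff_space t) (hsm₀.contDiff_space t), hpde x t ht, hpde₀ x t ht]
  ring

lemma le_add_mul_of_initial_le (hu : HeatSol T θ f u0 u) (hθ : 0 ≤ θ) (hf : ∀ x, 0 ≤ f x)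
    {M : ℝ} (hM : 0 ≤ M) (hu0 : ∀ x, u0 x ≤ M) {ε : ℝ} (hε : 0 < ε) :
    ∀ x, ∀ t ∈ Icc 0 T, u x t ≤ M + ε * t := by
  obtain ⟨hsm, hper, hpde, hinit⟩ := hu
  intro x t ht
  by_contra! hgt
  -- at a maximum of `u - ε t` above `M` we get `∂ₜu ≥ ε > 0`, while the equation gives `∂ₜu ≤ 0`
  obtain ⟨x₀, t₀, ht₀, hmax⟩ := ZPerSpace.exists_forall_le (u := fun x t => u x t - ε * t)
    (hsm.continuous.sub (continuous_const.mul continuous_snd))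
    (fun t y k => by simp only [hper t y k]) (ht.1.trans ht.2)
  have hbig : M + ε * t₀ < u x₀ t₀ := by linarith [hmax x t ht]
  have ht₀pos : 0 < t₀ := by
    refine ht₀.1.lt_of_ne fun h => ?_
    rw [← h, hinit] at hbig
    linarith [hu0 x₀]
  have hdt : ε ≤ deriv (u x₀) t₀ := by
    have hd : HasDerivAt (fun s => u x₀ s - ε * s) (deriv (u x₀) t₀ - ε) t₀ := by
      simpa using ((hsm.contDiff_time x₀).differentiable (by simp) t₀).hasDerivAt.fun_sub
        ((hasDerivAt_id t₀).const_mul ε)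
    linarith [hd.nonneg_of_forall_le ht₀pos fun s hs => hmax x₀ s ⟨hs.1, hs.2.trans ht₀.2⟩]
  have hlap : lap (fun y => u y t₀) x₀ ≤ 0 :=
    lap_nonpos_of_forall_le (hsm.contDiff_space t₀) fun y => by linarith [hmax y t₀ ht₀]
  have hpos : 0 ≤ f x₀ * u x₀ t₀ := mul_nonneg (hf x₀) (by nlinarith)
  nlinarith [hpde x₀ t₀ ⟨ht₀pos, ht₀.2⟩, mul_nonneg hθ (neg_nonneg.2 hlap)]

lemma le_of_initial_le (hu : HeatSol T θ f u0 u) (hθ : 0 ≤ θ) (hf : ∀ x, 0 ≤ f x)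
    {M : ℝ} (hM : 0 ≤ M) (hu0 : ∀ x, u0 x ≤ M) : ∀ x, ∀ t ∈ Icc 0 T, u x t ≤ M := by
  intro x t ht
  have hlim : Tendsto (fun ε => M + ε * t) (𝓝[>] 0) (𝓝 M) :=
    ((continuous_const.add (continuous_id.mul continuous_const)).tendsto' 0 M
      (by simp)).mono_left nhdsWithin_le_nhds
  refine ge_of_tendsto hlim ?_
  filter_upwards [self_mem_nhdsWithin] with ε hε
  exact hu.le_add_mul_of_initial_le hθ hf hM hu0 hε x t ht

lemma abs_le_of_initial_abs_le (hu : HeatSol T θ f u0 u) (hθ : 0 ≤ θ) (hf : ∀ x, 0 ≤ f x)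
    {M : ℝ} (hM : 0 ≤ M) (hu0 : ∀ x, |u0 x| ≤ M) : ∀ x, ∀ t ∈ Icc 0 T, |u x t| ≤ M :=
  fun x t ht => abs_le.2
    ⟨neg_le.1 (hu.neg.le_of_initial_le hθ hf hM (fun x => neg_le.1 (abs_le.1 (hu0 x)).1) x t ht),
      hu.le_of_initial_le hθ hf hM (fun x => (abs_le.1 (hu0 x)).2) x t ht⟩

end HeatSol

lemma contDiff_lap {v : (Fin d → ℝ) → ℝ} (hv : ContDiff ℝ ∞ v) : ContDiff ℝ ∞ (lap v) :=
  ContDiff.sum fun i _ => contDiff_pder (contDiff_pder hv i) i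

lemma l2T_le_mul_of_abs_le {k : ℝ} (hk : 0 ≤ k) {F G : (Fin d → ℝ) → ℝ} (hG : Continuous G)
    (hFG : ∀ x, |F x| ≤ k * |G x|) : l2T F ≤ k * l2T G := by
  have hsq (x : Fin d → ℝ) : F x ^ 2 ≤ k ^ 2 * G x ^ 2 := by
    rw [← sq_abs, ← sq_abs (G x), ← mul_pow]
    exact pow_le_pow_left₀ (abs_nonneg _) (hFG x) 2
  calc l2T F ≤ √(∫ x in unitCube d, k ^ 2 * G x ^ 2) :=
        sqrt_le_sqrt (integral_mono_of_nonneg (Eventually.of_forall fun x => sq_nonneg _)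
          ((hG.pow 2).integrableOn_Icc.const_mul _) (Eventually.of_forall hsq))
    _ = k * l2T G := by rw [integral_const_mul, sqrt_mul (sq_nonneg k), sqrt_sq hk, l2T]

namespace InhomSol

variable {T θ : ℝ} {f : (Fin d → ℝ) → ℝ} {g w : (Fin d → ℝ) → ℝ → ℝ}

lemma integral_mul_deriv_le (hw : InhomSol T θ f g w) (hθ : 0 ≤ θ) (hf : ∀ x, 0 ≤ f x)
    {t : ℝ} (hg : Continuous fun x => g x t) (ht : t ∈ Ioc 0 T) :
    ∫ x in unitCube d, 2 * w x t * deriv (w x) t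
      ≤ (∫ x in unitCube d, w x t ^ 2) + ∫ x in unitCube d, g x t ^ 2 := by
  obtain ⟨hsm, hper, hpde, -⟩ := hw
  have hwt := hsm.contDiff_space t
  -- `2 w Δw = Δ(w²) - 2 |∇w|²` and `2 w g ≤ w² + g²`
  have hpt (x : Fin d → ℝ) : 2 * w x t * deriv (w x) t
      ≤ θ / 2 * lap (fun y => w y t ^ 2) x + (w x t ^ 2 + g x t ^ 2) := by
    rw [hpde x t ht, lap_sq hwt x]
    have hgrad : 0 ≤ ∑ i, pder i (fun y => w y t) x ^ 2 :=
      Finset.sum_nonneg fun i _ => sq_nonneg _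
    nlinarith [mul_nonneg hθ hgrad, mul_nonneg (hf x) (sq_nonneg (w x t)),
      sq_nonneg (w x t - g x t)]
  have hlap : ∫ x in unitCube d, lap (fun y => w y t ^ 2) x = 0 :=
    ZPer.integral_lap_eq_zero (hwt.pow 2) fun x k => by simp only [hper t x k]
  have hint_lap : IntegrableOn (fun x => θ / 2 * lap (fun y => w y t ^ 2) x) (unitCube d) :=
    ((contDiff_lap (hwt.pow 2)).continuous.integrableOn_Icc).const_mul _
  have hint_w : IntegrableOn (fun x => w x t ^ 2) (unitCube d) :=
    (hwt.continuous.pow 2).integrableOn_Icc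
  have hint_g : IntegrableOn (fun x => g x t ^ 2) (unitCube d) := (hg.pow 2).integrableOn_Icc
  have hint_wg : IntegrableOn (fun x => w x t ^ 2 + g x t ^ 2) (unitCube d) :=
    hint_w.add hint_g
  have hint_lhs : IntegrableOn (fun x => 2 * w x t * deriv (w x) t) (unitCube d) :=
    ((continuous_const.mul hwt.continuous).mul
      (hsm.continuous_deriv_time.comp (continuous_id.prodMk continuous_const))).integrableOn_Icc
  calc ∫ x in unitCube d, 2 * w x t * deriv (w x) t
      ≤ ∫ x in unitCube d, θ / 2 * lap (fun y => w y t ^ 2) x + (w x t ^ 2 + g x t ^ 2) :=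
        setIntegral_mono_on hint_lhs (hint_lap.add hint_wg) measurableSet_Icc fun x _ => hpt x
    _ = (∫ x in unitCube d, w x t ^ 2) + ∫ x in unitCube d, g x t ^ 2 := by
        rw [integral_add hint_lap hint_wg, integral_add hint_w hint_g,
          integral_const_mul, hlap, mul_zero, zero_add]

lemma integral_sq_le (hw : InhomSol T θ f g w) (hθ : 0 ≤ θ) (hf : ∀ x, 0 ≤ f x)
    (hg : ∀ t, Continuous fun x => g x t) {c : ℝ}
    (hc : ∀ t ∈ Ioc 0 T, ∫ x in unitCube d, g x t ^ 2 ≤ c) :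
    ∀ t ∈ Icc 0 T, ∫ x in unitCube d, w x t ^ 2 ≤ c * (exp t - 1) := by
  have hE (t : ℝ) : HasDerivAt (fun s => ∫ x in unitCube d, w x s ^ 2)
      (∫ x in unitCube d, 2 * w x t * deriv (w x) t) t :=
    hw.1.hasDerivAt_setIntegral_sq isCompact_Icc t
  have hw0 (x : Fin d → ℝ) : w x 0 = 0 := hw.2.2.2 x
  have hE0 : ∫ x in unitCube d, w x 0 ^ 2 = 0 := by simp [hw0]
  have hbound : ∀ s ∈ Ico 0 T, ∫ x in unitCube d, 2 * w x s * deriv (w x) s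
      ≤ 1 * (∫ x in unitCube d, w x s ^ 2) + c := by
    intro s hs
    rcases hs.1.eq_or_lt with rfl | hs0
    · have hc0 : 0 ≤ c := (setIntegral_nonneg measurableSet_Icc fun x _ => sq_nonneg _).trans
        (hc T ⟨hs.2, le_rfl⟩)
      simpa [hw0] using hc0
    · linarith [hw.integral_mul_deriv_le hθ hf (hg s) ⟨hs0, hs.2.le⟩, hc s ⟨hs0, hs.2.le⟩]
  intro t ht
  simpa [gronwallBound_of_K_ne_0 one_ne_zero] using
    le_gronwallBound_of_liminf_deriv_right_le (δ := 0) (K := 1) (ε := c)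
      (fun s _ => (hE s).continuousAt.continuousWithinAt)
      (fun s _ r hr => (hE s).hasDerivWithinAt.liminf_right_slope_le hr) hE0.le hbound t ht

lemma l2Q_le (hw : InhomSol T θ f g w) (hT : 0 < T) (hθ : 0 ≤ θ) (hf : ∀ x, 0 ≤ f x)
    (hg : ∀ t, Continuous fun x => g x t) {c : ℝ}
    (hc : ∀ t ∈ Ioc 0 T, l2T (fun x => g x t) ≤ c) : l2Q T w ≤ √(T * exp T) * c := by
  have hc0 : 0 ≤ c := (sqrt_nonneg _).trans (hc T ⟨hT, le_rfl⟩)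
  have hE (t : ℝ) (ht : t ∈ Ioc 0 T) : ∫ x in unitCube d, w x t ^ 2 ≤ c ^ 2 * exp T := by
    refine (hw.integral_sq_le hθ hf hg (fun s hs => (sqrt_le_left hc0).1 (hc s hs)) t
      (Ioc_subset_Icc_self ht)).trans (mul_le_mul_of_nonneg_left ?_ (sq_nonneg c))
    linarith [exp_le_exp.2 ht.2]
  calc l2Q T w ≤ √(∫ _ in Ioc 0 T, c ^ 2 * exp T) :=
        sqrt_le_sqrt (integral_mono_of_nonneg (Eventually.of_forall fun t =>
            setIntegral_nonneg measurableSet_Icc fun x _ => sq_nonneg (w x t))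
          (integrableOn_const measure_Ioc_lt_top.ne) ((ae_restrict_mem measurableSet_Ioc).mono hE))
    _ = √(T * exp T) * c := by
        rw [setIntegral_const, Real.volume_real_Ioc_of_le hT.le, sub_zero, smul_eq_mul,
          show T * (c ^ 2 * exp T) = T * exp T * c ^ 2 by ring, sqrt_mul, sqrt_sq hc0]
        positivity

end InhomSol

lemma LinkFun.exists_lipschitzWith (Φ : LinkFun) : ∃ L : NNReal, LipschitzWith L Φ.toFun := by
  obtain ⟨C, hC⟩ := Φ.derivs_bdd 1 le_rfl
  refine ⟨C.toNNReal, lipschitzWith_of_nnnorm_deriv_le (Φ.smooth.differentiable (by simp))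
    fun s => ?_⟩
  rw [← NNReal.coe_le_coe, coe_nnnorm, Real.norm_eq_abs, ← iteratedDeriv_one]
  exact (hC s).trans (Real.le_coe_toNNReal C)

end

theorem forward_map_lipschitz_in_F_general {d : ℕ} (T θmin θmax : ℝ)
    (hT : 0 < T) (hθmin : 0 < θmin) (Φ : LinkFun)
    (u0 : (Fin d → ℝ) → ℝ) (hu0 : ContDiff ℝ (⊤ : ℕ∞) u0) (hu0per : ZPer u0) :
    ∃ D > (0 : ℝ), ∀ θ ∈ Set.Icc θmin θmax,
      ∀ F F₀ : (Fin d → ℝ) → ℝ, Continuous F → ZPer F → Continuous F₀ → ZPer F₀ →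
      ∀ uF uF₀ : (Fin d → ℝ) → ℝ → ℝ,
        HeatSol T θ (fun x => Φ.toFun (F x)) u0 uF →
        HeatSol T θ (fun x => Φ.toFun (F₀ x)) u0 uF₀ →
        l2Q T (fun x t => uF x t - uF₀ x t) ≤ D * l2T (fun x => F x - F₀ x) := by
  obtain ⟨L, hL⟩ := Φ.exists_lipschitzWith
  obtain ⟨M, hM0, hM⟩ := hu0per.exists_abs_le hu0.continuous
  refine ⟨√(T * exp T) * (L * M + 1), by positivity, ?_⟩
  intro θ hθ F F₀ hF _ hF₀ _ uF uF₀ huF huF₀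
  have hθ0 : 0 ≤ θ := hθmin.le.trans hθ.1
  have hΦ (s : ℝ) : 0 ≤ Φ.toFun s := (Φ.fmin_pos.trans (Φ.gt_fmin s)).le
  have huF₀_le := huF₀.abs_le_of_initial_abs_le hθ0 (fun _ => hΦ _) hM0 hM
  have hforcing (t : ℝ) (ht : t ∈ Ioc 0 T) :
      l2T (fun x => (Φ.toFun (F₀ x) - Φ.toFun (F x)) * uF₀ x t)
        ≤ L * M * l2T (fun x => F x - F₀ x) := by
    refine l2T_le_mul_of_abs_le (by positivity) (hF.sub hF₀) fun x => ?_
    rw [abs_mul, mul_right_comm, ← Real.dist_eq, ← Real.dist_eq (F x), dist_comm]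
    exact mul_le_mul (hL.dist_le_mul _ _) (huF₀_le x t (Ioc_subset_Icc_self ht))
      (abs_nonneg _) (by positivity)
  calc l2Q T (fun x t => uF x t - uF₀ x t)
      ≤ √(T * exp T) * (L * M * l2T (fun x => F x - F₀ x)) :=
        (huF.sub huF₀).l2Q_le hT hθ0 (fun _ => hΦ _) (fun t =>
          ((Φ.smooth.continuous.comp hF₀).sub (Φ.smooth.continuous.comp hF)).mul
            (huF₀.1.contDiff_space t).continuous) hforcing
    _ ≤ √(T * exp T) * (L * M + 1) * l2T (fun x => F x - F₀ x) := by
        have hl2T : 0 ≤ l2T (fun x => F x - F₀ x) := sqrt_nonneg _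
        rw [mul_assoc (√(T * exp T))]
        gcongr
        linarith

/-- Lipschitz continuity of the forward map `F ↦ K_θ F` in `L²`
(Lemma `bounds`, item (i)). -/
theorem forward_map_lipschitz_in_F {d : ℕ} (hd : 1 ≤ d) (T θmin θmax : ℝ)
    (hT : 0 < T) (hθmin : 0 < θmin) (hθ : θmin ≤ θmax) (Φ : LinkFun)
    (u0 : (Fin d → ℝ) → ℝ) (hu0 : ContDiff ℝ (⊤ : ℕ∞) u0) (hu0per : ZPer u0) :
    ∃ D > (0 : ℝ), ∀ θ ∈ Set.Icc θmin θmax,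
      ∀ F F₀ : (Fin d → ℝ) → ℝ, Continuous F → ZPer F → Continuous F₀ → ZPer F₀ →
      ∀ uF uF₀ : (Fin d → ℝ) → ℝ → ℝ,
        HeatSol T θ (fun x => Φ.toFun (F x)) u0 uF →
        HeatSol T θ (fun x => Φ.toFun (F₀ x)) u0 uF₀ →
        l2Q T (fun x t => uF x t - uF₀ x t) ≤ D * l2T (fun x => F x - F₀ x) :=
  forward_map_lipschitz_in_F_general T θmin θmax hT hθmin Φ u0 hu0 hu0per
end
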